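/- arXiv:2605.02001 — 2 statements merged into one kernel-verified Lean document; each statement's English description precedes it below -/
import Mathlib

section
/- If 0 < ρ_S < 1, 0 ≤ ρ_G < 1 and α > 0, then the powers of the buffer-occupancy Markov chain converge to its stationary distribution: for every pair of states i, j ∈ {0,…,L}, the sequence n ↦ (M^n)(i,j) converges to π(j) as n → ∞. -/
/-- The buffer-occupancy Markov chain transition matrix on states `{0,…,L}`. -/
noncomputable def Mmat (L : ℕ) (ρS ρG α : ℝ) :
    Matrix (Fin (L + 1)) (Fin (L + 1)) ℝ :=
  Matrix.of fun i j =>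
    if i.val = 0 then
      -- empty buffer
      if j.val = 0 then ρS else if j.val = 1 then 1 - ρS else 0
    else if i.val = L then
      -- full buffer
      if j.val + 1 = L then α * (1 - ρG) / (1 + α)
      else if j.val = L then (1 + α * ρG) / (1 + α)
      else 0
    else
      -- interior states
      if j.val + 1 = i.val then α * (1 - ρG) / (1 + α)
      else if j.val = i.val then (ρS + α * ρG) / (1 + α)
      else if j.val = i.val + 1 then (1 - ρS) / (1 + α)
      else 0

/-- The candidate stationary distribution `π` of the buffer-occupancy Markov chain. -/
noncomputable def piv (L : ℕ) (ρS ρG α : ℝ) : ℕ → ℝ := fun i =>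
  let p : ℝ := (1 - ρS) / (1 + α)
  let q : ℝ := α * (1 - ρG) / (1 + α)
  let π0 : ℝ := 1 / (1 + (1 - ρS) * ∑ k ∈ Finset.Icc 1 L, p ^ (k - 1) / q ^ k)
  if i = 0 then π0 else p ^ (i - 1) / q ^ i * (1 - ρS) * π0

/-!
The chain is a birth–death chain: its matrix is stochastic and tridiagonal with positive
diagonal and off-diagonals, so its `L`-th power is entrywise positive, and `π` satisfies
detailed balance, hence is stationary. If every entry of `Mᵐ` is at least `ε`, right
multiplication by `Mᵐ` contracts the `ℓ¹` norm of zero-sum vectors by `1 - (L + 1) ε < 1`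
(Doeblin). The rows of `Mⁿ - π` have zero sum, their `ℓ¹` norms are nonincreasing and their
limit `ℓ` satisfies `ℓ ≤ (1 - (L + 1) ε) ℓ`, so it is `0`.
-/

open Finset Matrix Filter Topology

lemma tendsto_zero_of_antitone_of_le_mul {d : ℕ → ℝ} {c : ℝ} {m : ℕ} (hd0 : ∀ n, 0 ≤ d n)
    (hd : Antitone d) (hc : c < 1) (hdm : ∀ n, d (n + m) ≤ c * d n) :
    Tendsto d atTop (𝓝 0) := by
  have hlim := tendsto_atTop_ciInf hd ⟨0, by rintro _ ⟨n, rfl⟩; exact hd0 n⟩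
  set ℓ := ⨅ n, d n
  have hℓ0 : 0 ≤ ℓ := ge_of_tendsto' hlim hd0
  have hℓc : ℓ ≤ c * ℓ :=
    le_of_tendsto_of_tendsto' (hlim.comp (tendsto_add_atTop_nat m)) (hlim.const_mul c) hdm
  rwa [show ℓ = 0 by nlinarith] at hlim

theorem Fintype.sum_eq_add_add {α M : Type*} [Fintype α] [DecidableEq α] [AddCommMonoid M]
    {f : α → M} (a b c : α) (hab : a ≠ b) (hac : a ≠ c) (hbc : b ≠ c)
    (h : ∀ x, x ≠ a → x ≠ b → x ≠ c → f x = 0) : ∑ x, f x = f a + f b + f c := by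
  rw [← Finset.sum_subset (subset_univ {a, b, c}) fun x _ hx => by simp_all,
    sum_insert (by simp [hab, hac]), sum_pair hbc, add_assoc]

namespace Matrix

variable {ι : Type*} [Fintype ι]

lemma vecMul_eq_self_of_detailed_balance {R : Type*} [CommSemiring R] {A : Matrix ι ι R}
    (hA : ∀ i, ∑ j, A i j = 1) {π : ι → R} (hπ : ∀ i j, π i * A i j = π j * A j i) :
    π ᵥ* A = π := by
  ext j
  simp only [vecMul, dotProduct, hπ _ j, ← mul_sum, hA, mul_one]

variable [DecidableEq ι]

lemma vecMul_pow_eq_self {R : Type*} [Semiring R] {A : Matrix ι ι R} {π : ι → R}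
    (hπ : π ᵥ* A = π) (n : ℕ) : π ᵥ* A ^ n = π := by
  induction n with
  | zero => simp
  | succ n ih => rw [pow_succ, ← vecMul_vecMul, ih, hπ]

lemma sum_abs_vecMul_le {A : Matrix ι ι ℝ} (hA : A ∈ rowStochastic ℝ ι) {ε : ℝ}
    (hε : ∀ i j, ε ≤ A i j) {v : ι → ℝ} (hv : ∑ i, v i = 0) :
    ∑ j, |(v ᵥ* A) j| ≤ (1 - Fintype.card ι * ε) * ∑ i, |v i| := by
  have hshift : ∀ j, (v ᵥ* A) j = ∑ i, v i * (A i j - ε) := by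
    intro j
    simp only [vecMul, dotProduct, mul_sub, sum_sub_distrib, ← sum_mul, hv, zero_mul, sub_zero]
  calc ∑ j, |(v ᵥ* A) j| ≤ ∑ j, ∑ i, |v i| * (A i j - ε) := by
        refine sum_le_sum fun j _ => ?_
        rw [hshift]
        refine (abs_sum_le_sum_abs _ _).trans (sum_le_sum fun i _ => ?_)
        rw [abs_mul, abs_of_nonneg (sub_nonneg.2 (hε i j))]
    _ = ∑ i, |v i| * (∑ j, A i j - Fintype.card ι * ε) := by
        rw [sum_comm]
        simp only [← mul_sum, sum_sub_distrib, sum_const, card_univ, nsmul_eq_mul]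
    _ = (1 - Fintype.card ι * ε) * ∑ i, |v i| := by
        simp only [sum_row_of_mem_rowStochastic hA, ← sum_mul, mul_comm]

theorem IsPrimitive.tendsto_pow_apply {A : Matrix ι ι ℝ} (hA : A.IsPrimitive)
    (hAs : A ∈ rowStochastic ℝ ι) {π : ι → ℝ} (hπ : π ᵥ* A = π) (hπ1 : ∑ i, π i = 1)
    (i j : ι) : Tendsto (fun n => (A ^ n) i j) atTop (𝓝 (π j)) := by
  obtain ⟨m, -, hm⟩ := hA.exists_pos_pow
  have : Nonempty ι := ⟨i⟩
  obtain ⟨⟨a, b⟩, hab⟩ := Finite.exists_min fun x : ι × ι => (A ^ m) x.1 x.2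
  set ε := (A ^ m) a b
  have hpow : ∀ n, A ^ n ∈ rowStochastic ℝ ι := fun n => pow_mem hAs n
  set v : ℕ → ι → ℝ := fun n => (A ^ n) i - π
  have hv : ∀ n k, v (n + k) = v n ᵥ* A ^ k := by
    intro n k
    simp only [v, sub_vecMul, vecMul_pow_eq_self hπ, pow_add, mul_apply_eq_vecMul]
  have hv0 : ∀ n, ∑ k, v n k = 0 := by
    intro n
    simp [v, sum_sub_distrib, sum_row_of_mem_rowStochastic (hpow n), hπ1]
  set d : ℕ → ℝ := fun n => ∑ k, |v n k|
  set c := 1 - Fintype.card ι * ε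
  have hc : c < 1 := by
    have : (1 : ℝ) ≤ Fintype.card ι := Nat.one_le_cast.2 Fintype.card_pos
    nlinarith [hm a b]
  have hd_succ : ∀ n, d (n + 1) ≤ d n := fun n => by
    simpa [d, hv n 1] using
      sum_abs_vecMul_le hAs (ε := 0) (fun _ _ => nonneg_of_mem_rowStochastic hAs) (hv0 n)
  have hd_add : ∀ n, d (n + m) ≤ c * d n := fun n => by
    simpa only [d, hv n m] using sum_abs_vecMul_le (hpow m) (fun k l => hab (k, l)) (hv0 n)
  have hd : Tendsto d atTop (𝓝 0) :=
    tendsto_zero_of_antitone_of_le_mul (fun n => sum_nonneg fun k _ => abs_nonneg _)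
      (antitone_nat_of_succ_le hd_succ) hc hd_add
  have hvj : Tendsto (fun n => v n j) atTop (𝓝 0) :=
    squeeze_zero_norm (fun n => single_le_sum (f := fun k => |v n k|)
      (fun k _ => abs_nonneg _) (mem_univ j)) hd
  simpa [v] using hvj.add_const (π j)

lemma pow_apply_pos_of_tridiagonal {N : ℕ} {A : Matrix (Fin N) (Fin N) ℝ}
    (hA : ∀ i j, 0 ≤ A i j) (hpos : ∀ i j : Fin N, (i : ℕ) ≤ j + 1 → (j : ℕ) ≤ i + 1 → 0 < A i j)
    (n : ℕ) : ∀ i j : Fin N, (i : ℕ) ≤ j + n → (j : ℕ) ≤ i + n → 0 < (A ^ n) i j := by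
  induction n with
  | zero =>
    intro i j hij hji
    obtain rfl : i = j := Fin.ext (by omega)
    simp
  | succ n ih =>
    intro i j hij hji
    -- one step from `i` towards `j`
    let k : Fin N := ⟨min (i + 1) (max (i - 1) j), by omega⟩
    rw [pow_succ', mul_apply]
    exact sum_pos' (fun l _ => mul_nonneg (hA i l) (pow_apply_nonneg hA n l j))
      ⟨k, mem_univ k, mul_pos (hpos i k (by simp only [k]; omega) (by simp only [k]; omega))
        (ih k j (by simp only [k]; omega) (by simp only [k]; omega))⟩

end Matrix

section BufferChain

variable {L : ℕ} {ρS ρG α : ℝ}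

lemma Mmat_apply_eq_zero {i j : Fin (L + 1)} (h : (j : ℕ) + 1 < i ∨ (i : ℕ) + 1 < j) :
    Mmat L ρS ρG α i j = 0 := by
  simp only [Mmat, of_apply]
  split_ifs <;> first | rfl | omega

lemma Mmat_apply_downward {i j : Fin (L + 1)} (h : (j : ℕ) + 1 = i) :
    Mmat L ρS ρG α i j = α * (1 - ρG) / (1 + α) := by
  have := i.isLt
  simp only [Mmat, of_apply]
  split_ifs <;> first | rfl | omega

lemma Mmat_apply_upward {i j : Fin (L + 1)} (h : (i : ℕ) + 1 = j) :
    Mmat L ρS ρG α i j = if (i : ℕ) = 0 then 1 - ρS else (1 - ρS) / (1 + α) := by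
  have := j.isLt
  simp only [Mmat, of_apply]
  split_ifs <;> first | rfl | omega

lemma Mmat_apply_self (i : Fin (L + 1)) :
    Mmat L ρS ρG α i i = if (i : ℕ) = 0 then ρS else if (i : ℕ) = L then (1 + α * ρG) / (1 + α)
      else (ρS + α * ρG) / (1 + α) := by
  simp only [Mmat, of_apply]
  split_ifs <;> first | rfl | omega

lemma Mmat_nonneg (hS0 : 0 ≤ ρS) (hS1 : ρS ≤ 1) (hG0 : 0 ≤ ρG) (hG1 : ρG ≤ 1) (hα : 0 < α)
    (i j : Fin (L + 1)) : 0 ≤ Mmat L ρS ρG α i j := by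
  simp only [Mmat, of_apply]
  split_ifs <;> first | rfl | linarith | exact div_nonneg (by nlinarith) (by linarith)

lemma Mmat_pos_of_adjacent (hS0 : 0 < ρS) (hS1 : ρS < 1) (hG0 : 0 ≤ ρG) (hG1 : ρG < 1)
    (hα : 0 < α) {i j : Fin (L + 1)} (hij : (i : ℕ) ≤ j + 1) (hji : (j : ℕ) ≤ i + 1) :
    0 < Mmat L ρS ρG α i j := by
  simp only [Mmat, of_apply]
  split_ifs <;> first | omega | linarith | exact div_pos (by nlinarith) (by linarith)

lemma sum_Mmat_row (hL : 1 ≤ L) (hα : 0 < α) (i : Fin (L + 1)) :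
    ∑ j, Mmat L ρS ρG α i j = 1 := by
  have hα' : 1 + α ≠ 0 := by linarith
  have hi := i.isLt
  by_cases h0 : (i : ℕ) = 0
  · rw [Fintype.sum_eq_add i ⟨1, by omega⟩ (Fin.ne_of_val_ne (by dsimp only; omega))
      fun j hj => Mmat_apply_eq_zero (by simp [Fin.ext_iff] at hj; omega),
      Mmat_apply_self, Mmat_apply_upward (by simp [h0]), if_pos h0, if_pos h0]
    ring
  by_cases hL' : (i : ℕ) = L
  · rw [Fintype.sum_eq_add ⟨L - 1, by omega⟩ i (Fin.ne_of_val_ne (by dsimp only; omega))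
      fun j hj => Mmat_apply_eq_zero (by simp [Fin.ext_iff] at hj; omega),
      Mmat_apply_downward (by dsimp only; omega), Mmat_apply_self, if_neg h0, if_pos hL']
    field_simp
    ring
  · rw [Fintype.sum_eq_add_add ⟨i - 1, by omega⟩ i ⟨i + 1, by omega⟩
      (Fin.ne_of_val_ne (by dsimp only; omega)) (Fin.ne_of_val_ne (by dsimp only; omega))
      (Fin.ne_of_val_ne (by dsimp only; omega))
      fun j h1 h2 h3 => Mmat_apply_eq_zero (by simp [Fin.ext_iff] at h1 h2 h3; omega),
      Mmat_apply_downward (by dsimp only; omega), Mmat_apply_self, Mmat_apply_upward rfl,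
      if_neg h0, if_neg hL', if_neg h0]
    field_simp
    ring

lemma piv_succ (k : ℕ) : piv L ρS ρG α (k + 1) =
    ((1 - ρS) / (1 + α)) ^ k / (α * (1 - ρG) / (1 + α)) ^ (k + 1) * (1 - ρS) *
      piv L ρS ρG α 0 := by
  simp [piv]

lemma sum_piv (hS1 : ρS < 1) (hG1 : ρG < 1) (hα : 0 < α) :
    ∑ j : Fin (L + 1), piv L ρS ρG α j = 1 := by
  set S := ∑ k ∈ Icc 1 L, ((1 - ρS) / (1 + α)) ^ (k - 1) / (α * (1 - ρG) / (1 + α)) ^ k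
  have hS : 0 ≤ S := sum_nonneg fun k _ => by
    have : 0 ≤ α * (1 - ρG) := by nlinarith
    positivity
  have hden : 1 + (1 - ρS) * S ≠ 0 := by nlinarith
  have hpiv0 : piv L ρS ρG α 0 = 1 / (1 + (1 - ρS) * S) := rfl
  have htail : ∑ k ∈ Icc 1 L, piv L ρS ρG α k = (1 - ρS) * S * piv L ρS ρG α 0 := by
    rw [mul_comm (1 - ρS), mul_assoc, sum_mul]
    refine sum_congr rfl fun k hk => ?_
    obtain ⟨k, rfl⟩ : ∃ k', k = k' + 1 := ⟨k - 1, by simp at hk; omega⟩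
    rw [piv_succ, Nat.add_sub_cancel]
    ring
  rw [Fin.sum_univ_eq_sum_range (piv L ρS ρG α), range_eq_Ico,
    sum_eq_sum_Ico_succ_bot (Nat.zero_lt_succ L), Nat.succ_eq_add_one, zero_add,
    Ico_add_one_right_eq_Icc, htail, hpiv0]
  field_simp

lemma piv_mul_Mmat_upward (hG1 : ρG < 1) (hα : 0 < α) (k : ℕ) :
    piv L ρS ρG α k * (if k = 0 then 1 - ρS else (1 - ρS) / (1 + α)) =
      piv L ρS ρG α (k + 1) * (α * (1 - ρG) / (1 + α)) := by
  have : α ≠ 0 := hα.ne'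
  have : 1 - ρG ≠ 0 := by linarith
  have : 1 + α ≠ 0 := by linarith
  rcases k with _ | k
  · rw [if_pos rfl, piv_succ, pow_zero, pow_one]
    field_simp
  · rw [if_neg k.succ_ne_zero, piv_succ, piv_succ]
    field_simp
    ring

lemma piv_mul_Mmat_comm (hG1 : ρG < 1) (hα : 0 < α) (i j : Fin (L + 1)) :
    piv L ρS ρG α i * Mmat L ρS ρG α i j = piv L ρS ρG α j * Mmat L ρS ρG α j i := by
  by_cases hij : (i : ℕ) + 1 = j
  · rw [Mmat_apply_upward hij, Mmat_apply_downward hij, ← hij]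
    exact piv_mul_Mmat_upward hG1 hα i
  by_cases hji : (j : ℕ) + 1 = i
  · rw [Mmat_apply_upward hji, Mmat_apply_downward hji, ← hji]
    exact (piv_mul_Mmat_upward hG1 hα j).symm
  obtain rfl | hne := eq_or_ne i j
  · rfl
  have := Fin.val_ne_of_ne hne
  rw [Mmat_apply_eq_zero (by omega), Mmat_apply_eq_zero (by omega), mul_zero, mul_zero]

lemma Mmat_mem_rowStochastic (hL : 1 ≤ L) (hS0 : 0 ≤ ρS) (hS1 : ρS ≤ 1) (hG0 : 0 ≤ ρG)
    (hG1 : ρG ≤ 1) (hα : 0 < α) : Mmat L ρS ρG α ∈ rowStochastic ℝ (Fin (L + 1)) :=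
  mem_rowStochastic_iff_sum.2 ⟨Mmat_nonneg hS0 hS1 hG0 hG1 hα, sum_Mmat_row hL hα⟩

lemma isPrimitive_Mmat (hL : 1 ≤ L) (hS0 : 0 < ρS) (hS1 : ρS < 1) (hG0 : 0 ≤ ρG)
    (hG1 : ρG < 1) (hα : 0 < α) : (Mmat L ρS ρG α).IsPrimitive :=
  ⟨Mmat_nonneg hS0.le hS1.le hG0 hG1.le hα, L, hL, fun i j =>
    pow_apply_pos_of_tridiagonal (Mmat_nonneg hS0.le hS1.le hG0 hG1.le hα)
      (fun _ _ => Mmat_pos_of_adjacent hS0 hS1 hG0 hG1 hα) L i j (by omega) (by omega)⟩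

end BufferChain

/-- if `0 < ρS < 1`, `0 ≤ ρG < 1`, `α > 0`, the powers of the
buffer-occupancy chain converge entrywise to the stationary distribution `π`. -/
theorem stmt9 (L : ℕ) (hL : 1 ≤ L) (ρS ρG α : ℝ)
    (hS0 : 0 < ρS) (hS1 : ρS < 1) (hG0 : 0 ≤ ρG) (hG1 : ρG < 1) (hα : 0 < α) :
    ∀ i j : Fin (L + 1),
      Filter.Tendsto (fun n : ℕ => (Mmat L ρS ρG α ^ n) i j) Filter.atTop
        (nhds (piv L ρS ρG α j.val)) := by
  intro i j
  exact (isPrimitive_Mmat hL hS0 hS1 hG0 hG1 hα).tendsto_pow_apply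
    (Mmat_mem_rowStochastic hL hS0.le hS1.le hG0 hG1.le hα)
    (vecMul_eq_self_of_detailed_balance (sum_Mmat_row hL hα) (piv_mul_Mmat_comm hG1 hα))
    (sum_piv hS1 hG1 hα) i j
end

section
/- If 0 ≤ ρ_S < 1, 0 ≤ ρ_G < 1 and α > 0, then for any stationary probability distribution σ of the buffer-occupancy Markov chain (i.e., σ(i) ≥ 0, Σ_{i=0}^{L} σ(i) = 1, and Σ_{i=0}^{L} σ(i)·M(i,j) = σ(j) for all j), the packet dropping probability satisfies the closed form p·σ(L) = (p/q)^L·(1−ρ_S)·π(0), where π(0) = 1/(1 + (1−ρ_S)·Σ_{i=1}^{L} p^{i−1}/q^{i}). -/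
open Finset

theorem Matrix.sum_sum_compl_eq_sum_compl_sum_of_stationary {ι R : Type*} [Fintype ι]
    [DecidableEq ι] [Ring R] (M : Matrix ι ι R) (hM : ∀ i, ∑ j, M i j = 1) (σ : ι → R)
    (hσ : ∀ j, ∑ i, σ i * M i j = σ j) (S : Finset ι) :
    ∑ i ∈ S, ∑ j ∈ Sᶜ, σ i * M i j = ∑ i ∈ Sᶜ, ∑ j ∈ S, σ i * M i j := by
  have hout : ∑ i ∈ S, ∑ j ∈ Sᶜ, σ i * M i j + ∑ i ∈ S, ∑ j ∈ S, σ i * M i j =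
      ∑ i ∈ S, σ i := by
    rw [← sum_add_distrib]
    refine sum_congr rfl fun i _ => ?_
    rw [add_comm, sum_add_sum_compl, ← mul_sum, hM, mul_one]
  have hin : ∑ i ∈ Sᶜ, ∑ j ∈ S, σ i * M i j + ∑ i ∈ S, ∑ j ∈ S, σ i * M i j =
      ∑ j ∈ S, σ j := by
    rw [add_comm, sum_add_sum_compl, sum_comm]
    exact sum_congr rfl fun j _ => hσ j
  exact add_right_cancel (hout.trans hin.symm)

theorem Finset.sum_sum_eq_single_of_mem {α β M : Type*} [AddCommMonoid M] {s : Finset α}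
    {t : Finset β} {f : α → β → M} (a : α) (b : β) (ha : a ∈ s) (hb : b ∈ t)
    (h : ∀ i ∈ s, ∀ j ∈ t, f i j ≠ 0 → i = a ∧ j = b) :
    ∑ i ∈ s, ∑ j ∈ t, f i j = f a b := by
  rw [sum_eq_single_of_mem a ha, sum_eq_single_of_mem b hb]
  · exact fun j hj hjb => by_contra fun hne => hjb (h a ha j hj hne).2
  · exact fun i hi hia => sum_eq_zero fun j hj => by_contra fun hne => hia (h i hi j hj hne).1

theorem Matrix.detailed_balance_of_tridiagonal {n : ℕ} {R : Type*} [Ring R]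
    (M : Matrix (Fin (n + 1)) (Fin (n + 1)) R) (hM : ∀ i, ∑ j, M i j = 1)
    (htri : ∀ i j, M i j ≠ 0 → (i : ℕ) ≤ j + 1 ∧ (j : ℕ) ≤ i + 1) (σ : Fin (n + 1) → R)
    (hσ : ∀ j, ∑ i, σ i * M i j = σ j) (k : Fin n) :
    σ k.castSucc * M k.castSucc k.succ = σ k.succ * M k.succ k.castSucc := by
  have hcut := M.sum_sum_compl_eq_sum_compl_sum_of_stationary hM σ hσ (Iic k.castSucc)
  rwa [sum_sum_eq_single_of_mem k.castSucc k.succ (by simp) (by simp),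
    sum_sum_eq_single_of_mem k.succ k.castSucc (by simp) (by simp)] at hcut
  all_goals
    intro i hi j hj hne
    have := htri i j (right_ne_zero_of_mul hne)
    simp only [mem_compl, mem_Iic, not_le, Fin.le_def, Fin.ext_iff,
      Fin.val_castSucc, Fin.val_succ] at hi hj ⊢
    omega

theorem Fin.sum_ite_val_eq {n : ℕ} {M : Type*} [AddCommMonoid M] (c : ℕ) (x : M) :
    ∑ j : Fin n, (if (j : ℕ) = c then x else 0) = if c < n then x else 0 := by
  rw [Fin.sum_univ_eq_sum_range (fun b => if b = c then x else 0), sum_ite_eq']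
  simp only [mem_range]

theorem eq_mul_pow_div_pow_of_balance {K : Type*} [Field K] {s : ℕ → K} {c p q : K} {n : ℕ}
    (hq : q ≠ 0) (h₀ : s 0 * c = s 1 * q) (hstep : ∀ k, 0 < k → k < n → s k * p = s (k + 1) * q) :
    ∀ k < n, s (k + 1) = c * p ^ k / q ^ (k + 1) * s 0 := by
  intro k hk
  induction k with
  | zero => rw [eq_div_of_mul_eq hq h₀.symm]; ring
  | succ k ih =>
    have := hstep (k + 1) (by omega) hk
    rw [ih (by omega)] at this
    rw [eq_div_of_mul_eq hq this.symm]
    ring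

theorem sum_range_succ_eq_mul_of_eq_mul_pow_div_pow {K : Type*} [Field K] {s : ℕ → K}
    {c p q : K} {n : ℕ} (hs : ∀ k < n, s (k + 1) = c * p ^ k / q ^ (k + 1) * s 0) :
    ∑ k ∈ range (n + 1), s k = s 0 * (1 + c * ∑ i ∈ Icc 1 n, p ^ (i - 1) / q ^ i) := by
  rw [sum_range_succ', ← Ico_add_one_right_eq_Icc, sum_Ico_eq_sum_range, Nat.add_sub_cancel,
    mul_sum, mul_add, mul_one, mul_sum, add_comm]
  refine congrArg (s 0 + ·) (sum_congr rfl fun k hk => ?_)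
  rw [hs k (mem_range.1 hk), add_comm 1 k, Nat.add_sub_cancel]
  ring

theorem Mmat_tridiagonal (L : ℕ) (ρS ρG α : ℝ) (i j : Fin (L + 1))
    (h : Mmat L ρS ρG α i j ≠ 0) : (i : ℕ) ≤ j + 1 ∧ (j : ℕ) ≤ i + 1 := by
  simp only [Mmat, Matrix.of_apply] at h
  split_ifs at h <;> first | omega | exact absurd rfl h

theorem Mmat_row_sum (L : ℕ) (hL : 1 ≤ L) (ρS ρG α : ℝ) (hα : 1 + α ≠ 0) (i : Fin (L + 1)) :
    ∑ j, Mmat L ρS ρG α i j = 1 := by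
  have hi := i.isLt
  have hsplit : ∀ j : Fin (L + 1), Mmat L ρS ρG α i j =
      (if (j : ℕ) = i - 1 then (if (i : ℕ) = 0 then 0 else α * (1 - ρG) / (1 + α)) else 0) +
      (if (j : ℕ) = i then
        (if (i : ℕ) = 0 then ρS
         else if (i : ℕ) = L then (1 + α * ρG) / (1 + α) else (ρS + α * ρG) / (1 + α))
       else 0) +
      (if (j : ℕ) = i + 1 then (if (i : ℕ) = 0 then 1 - ρS else (1 - ρS) / (1 + α)) else 0) := by
    intro j
    simp only [Mmat, Matrix.of_apply]
    split_ifs <;> first | omega | simp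
  simp only [hsplit, sum_add_distrib, Fin.sum_ite_val_eq]
  split_ifs <;> first | omega | (field_simp; ring)

theorem Mmat_castSucc_succ (L : ℕ) (ρS ρG α : ℝ) (k : Fin L) :
    Mmat L ρS ρG α k.castSucc k.succ = if (k : ℕ) = 0 then 1 - ρS else (1 - ρS) / (1 + α) := by
  simp only [Mmat, Matrix.of_apply, Fin.val_castSucc, Fin.val_succ]
  have := k.isLt
  split_ifs <;> first | rfl | omega | contradiction

theorem Mmat_succ_castSucc (L : ℕ) (ρS ρG α : ℝ) (k : Fin L) :
    Mmat L ρS ρG α k.succ k.castSucc = α * (1 - ρG) / (1 + α) := by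
  simp only [Mmat, Matrix.of_apply, Fin.val_castSucc, Fin.val_succ]
  have := k.isLt
  split_ifs <;> first | rfl | omega | contradiction

theorem stmt11_general (L : ℕ) (hL : 1 ≤ L) (ρS ρG α : ℝ)
    (hG1 : ρG < 1) (hα : 0 < α) :
    ∀ σ : Fin (L + 1) → ℝ,
      (∀ i : Fin (L + 1), 0 ≤ σ i) →
      (∑ i : Fin (L + 1), σ i = 1) →
      (∀ j : Fin (L + 1), ∑ i : Fin (L + 1), σ i * Mmat L ρS ρG α i j = σ j) →
      (1 - ρS) / (1 + α) * σ (Fin.last L) =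
        ((1 - ρS) / (1 + α) / (α * (1 - ρG) / (1 + α))) ^ L * (1 - ρS) *
          (1 / (1 + (1 - ρS) * ∑ i ∈ Finset.Icc 1 L,
            ((1 - ρS) / (1 + α)) ^ (i - 1) / (α * (1 - ρG) / (1 + α)) ^ i)) := by
  intro σ _ hsum hstat
  set p := (1 - ρS) / (1 + α)
  set q := α * (1 - ρG) / (1 + α)
  have hq : q ≠ 0 := (div_pos (mul_pos hα (sub_pos.2 hG1)) (by linarith)).ne'
  set s : ℕ → ℝ := fun n => σ (Fin.ofNat (L + 1) n)
  have hσs : ∀ i : Fin (L + 1), σ i = s i := fun i => by simp only [s, Fin.ofNat_val_eq_self]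
  have hbal : ∀ k : Fin L, s k * (if (k : ℕ) = 0 then 1 - ρS else p) = s (k + 1) * q := by
    intro k
    have := (Mmat L ρS ρG α).detailed_balance_of_tridiagonal
      (Mmat_row_sum L hL ρS ρG α (by linarith)) (Mmat_tridiagonal L ρS ρG α) σ hstat k
    rwa [Mmat_castSucc_succ, Mmat_succ_castSucc, hσs, hσs, Fin.val_castSucc, Fin.val_succ] at this
  have hs : ∀ k < L, s (k + 1) = (1 - ρS) * p ^ k / q ^ (k + 1) * s 0 :=
    eq_mul_pow_div_pow_of_balance hq (by simpa using hbal ⟨0, hL⟩)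
      fun k hk0 hkL => by simpa [hk0.ne'] using hbal ⟨k, hkL⟩
  have hnorm : s 0 * (1 + (1 - ρS) * ∑ i ∈ Icc 1 L, p ^ (i - 1) / q ^ i) = 1 := by
    rw [← sum_range_succ_eq_mul_of_eq_mul_pow_div_pow hs, ← hsum, ← Fin.sum_univ_eq_sum_range]
    simp only [hσs]
  clear_value p q s
  obtain ⟨n, rfl⟩ : ∃ n, L = n + 1 := ⟨L - 1, by omega⟩
  rw [hσs, Fin.val_last, hs n (by omega), eq_one_div_of_mul_eq_one_left hnorm]
  ring

/-- for any stationary probability distribution `σ` of the buffer-occupancy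
chain, the packet dropping probability `p·σ(L)` has the closed form
`(p/q)^L·(1−ρS)·π(0)`. -/
theorem stmt11 (L : ℕ) (hL : 1 ≤ L) (ρS ρG α : ℝ)
    (hS0 : 0 ≤ ρS) (hS1 : ρS < 1) (hG0 : 0 ≤ ρG) (hG1 : ρG < 1) (hα : 0 < α) :
    ∀ σ : Fin (L + 1) → ℝ,
      (∀ i : Fin (L + 1), 0 ≤ σ i) →
      (∑ i : Fin (L + 1), σ i = 1) →
      (∀ j : Fin (L + 1), ∑ i : Fin (L + 1), σ i * Mmat L ρS ρG α i j = σ j) →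
      (1 - ρS) / (1 + α) * σ (Fin.last L) =
        ((1 - ρS) / (1 + α) / (α * (1 - ρG) / (1 + α))) ^ L * (1 - ρS) *
          (1 / (1 + (1 - ρS) * ∑ i ∈ Finset.Icc 1 L,
            ((1 - ρS) / (1 + α)) ^ (i - 1) / (α * (1 - ρG) / (1 + α)) ^ i)) :=
  stmt11_general L hL ρS ρG α hG1 hα
end
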